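/- Let W be a finite set of n pages, let E be a finite set of entities, and let occ : E → Finset W assign to each entity the nonempty set of pages in which it occurs. Let k be an integer with 0 < k < n, and draw P' uniformly at random among the k-element subsets of W. Suppose there exists an entity e₀ ∈ E with |occ(e₀)| ≥ 2 (i.e., some entity occurs in strictly more than one page). Then the expected number of entities e ∈ E whose occurrence set occ(e) intersects P' is strictly greater than (k/n)·|E|. -/

import Mathlib

/-! Fix, for each entity, a page `a ∈ occ e`. The `k`-subsets meeting `occ e` include the
`(n-1).choose (k-1)` subsets containing `a`, and when `occ e` has a second page `b` they also
include a subset containing `b` but not `a`. Summing over entities and using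
`n * (n-1).choose (k-1) = k * n.choose k` gives the strict bound on the expectation. -/

open Finset

namespace Finset

variable {α : Type*} [DecidableEq α] {W A : Finset α} {a b : α} {k : ℕ}

lemma card_powersetCard_filter_mem (ha : a ∈ W) (hk : 0 < k) :
    #{S ∈ W.powersetCard k | a ∈ S} = (#W - 1).choose (k - 1) := by
  simpa using card_filter_powersetCard_subset {a} W k (singleton_subset_iff.2 ha) hk

lemma powersetCard_filter_mem_subset_filter_inter_nonempty (ha : a ∈ A) :
    {S ∈ W.powersetCard k | a ∈ S} ⊆ {S ∈ W.powersetCard k | (A ∩ S).Nonempty} :=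
  monotone_filter_right _ fun _ _ haS => ⟨a, mem_inter.2 ⟨ha, haS⟩⟩

lemma powersetCard_filter_mem_ssubset_filter_inter_nonempty (hAW : A ⊆ W) (ha : a ∈ A)
    (hb : b ∈ A) (hab : a ≠ b) (hk0 : 0 < k) (hkW : k < #W) :
    {S ∈ W.powersetCard k | a ∈ S} ⊂ {S ∈ W.powersetCard k | (A ∩ S).Nonempty} := by
  refine ssubset_iff_subset_ne.2 ⟨powersetCard_filter_mem_subset_filter_inter_nonempty ha, ?_⟩
  have hb' : {b} ⊆ W.erase a := singleton_subset_iff.2 (mem_erase.2 ⟨hab.symm, hAW hb⟩)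
  obtain ⟨S, hbS, hSW, hS⟩ := exists_subsuperset_card_eq hb' (by simpa using Nat.succ_le_of_lt hk0)
    (by rw [card_erase_of_mem (hAW ha)]; omega)
  have hS_mem : S ∈ {S ∈ W.powersetCard k | (A ∩ S).Nonempty} :=
    mem_filter.2 ⟨mem_powersetCard.2 ⟨hSW.trans (erase_subset a W), hS⟩,
      ⟨b, mem_inter.2 ⟨hb, singleton_subset_iff.1 hbS⟩⟩⟩
  have hS_not_mem : S ∉ {S ∈ W.powersetCard k | a ∈ S} := fun h =>
    notMem_erase a W (hSW (mem_filter.1 h).2)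
  exact fun h => hS_not_mem (h ▸ hS_mem)

lemma choose_pred_le_card_filter_inter_nonempty (hAW : A ⊆ W) (hA : A.Nonempty) (hk : 0 < k) :
    (#W - 1).choose (k - 1) ≤ #{S ∈ W.powersetCard k | (A ∩ S).Nonempty} := by
  obtain ⟨a, ha⟩ := hA
  rw [← card_powersetCard_filter_mem (hAW ha) hk]
  exact card_le_card (powersetCard_filter_mem_subset_filter_inter_nonempty ha)

lemma choose_pred_lt_card_filter_inter_nonempty (hAW : A ⊆ W) (hA : 1 < #A) (hk0 : 0 < k)
    (hkW : k < #W) :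
    (#W - 1).choose (k - 1) < #{S ∈ W.powersetCard k | (A ∩ S).Nonempty} := by
  obtain ⟨a, ha, b, hb, hab⟩ := one_lt_card.1 hA
  rw [← card_powersetCard_filter_mem (hAW ha) hk0]
  exact card_lt_card
    (powersetCard_filter_mem_ssubset_filter_inter_nonempty hAW ha hb hab hk0 hkW)

end Finset

/-- **Coverage theorem (expectation form).**
Let `W` be a finite set of `n` pages, `E` a finite set of entities, and
`occ : ε → Finset α` assign to each entity the nonempty set of pages (within `W`)
in which it occurs.  Let `0 < k < n` and draw `P'` uniformly among the `k`-element
subsets of `W`.  If some entity `e₀ ∈ E` occurs in at least two pages, then the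
expected number of entities whose occurrence set intersects `P'` is strictly
greater than `(k/n) * |E|`. -/
theorem expected_covered_entities_gt
    {α ε : Type*} [DecidableEq α]
    (W : Finset α) (E : Finset ε) (occ : ε → Finset α)
    (n k : ℕ) (hW : W.card = n) (hk0 : 0 < k) (hkn : k < n)
    (hocc_sub : ∀ e ∈ E, occ e ⊆ W)
    (hocc_ne : ∀ e ∈ E, (occ e).Nonempty)
    (e₀ : ε) (he₀ : e₀ ∈ E) (he₀2 : 2 ≤ (occ e₀).card) :
    ((∑ S ∈ W.powersetCard k,
        (E.filter (fun e => (occ e ∩ S).Nonempty)).card : ℝ) / (n.choose k))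
      > ((k : ℝ) / n) * E.card := by
  subst hW
  have hn : 0 < #W := hk0.trans hkn
  have hsum : #E * (#W - 1).choose (k - 1) <
      ∑ S ∈ W.powersetCard k, #{e ∈ E | (occ e ∩ S).Nonempty} := by
    calc #E * (#W - 1).choose (k - 1) = ∑ _e ∈ E, (#W - 1).choose (k - 1) := by
          rw [sum_const, smul_eq_mul]
      _ < ∑ e ∈ E, #{S ∈ W.powersetCard k | (occ e ∩ S).Nonempty} :=
          sum_lt_sum (fun e he => choose_pred_le_card_filter_inter_nonempty (hocc_sub e he)
              (hocc_ne e he) hk0)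
            ⟨e₀, he₀, choose_pred_lt_card_filter_inter_nonempty (hocc_sub e₀ he₀) he₀2 hk0 hkn⟩
      _ = _ := (sum_card_bipartiteAbove_eq_sum_card_bipartiteBelow _).symm
  have hchoose : #W * (#W - 1).choose (k - 1) = (#W).choose k * k := by
    simpa [Nat.sub_add_cancel hn, Nat.sub_add_cancel hk0] using
      Nat.add_one_mul_choose_eq (#W - 1) (k - 1)
  have hnat : k * #E * (#W).choose k < (∑ S ∈ W.powersetCard k,
      #{e ∈ E | (occ e ∩ S).Nonempty}) * #W := by
    calc k * #E * (#W).choose k = #W * (#E * (#W - 1).choose (k - 1)) := by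
          rw [mul_left_comm, hchoose]; ring
      _ < _ := by rw [mul_comm _ #W]; exact Nat.mul_lt_mul_of_pos_left hsum hn
  rw [gt_iff_lt, ← Nat.cast_sum, div_mul_eq_mul_div,
    div_lt_div_iff₀ (Nat.cast_pos.2 hn) (Nat.cast_pos.2 (Nat.choose_pos hkn.le))]
  exact_mod_cast hnat
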